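/- Let x, y ∈ [0,1]^d and for each coordinate i let w_m^{x_i} satisfy the univariate moment property ∫_0^1 w_m^{x_i}(z) z^k dz = x_i^k for all 0 ≤ k ≤ m-1. Let p be a strictly positive density on [0,1]^d and define W_m^x(z) := (∏_{i=1}^d w_m^{x_i}(z_i)) / p(z). Then for every integer ℓ with 2ℓ ≤ m-1, ∫_{[0,1]^d} (‖y - z‖₂²)^ℓ W_m^x(z) p(z) dz = (‖y - x‖₂²)^ℓ. -/

import Mathlib

/-!
By the multinomial theorem, `(∑ i, (y i - z i) ^ 2) ^ ℓ` is a linear combination of products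
`∏ i, q i (z i)` of univariate polynomials of degree at most `2 ℓ ≤ m - 1`. On the cube the
density cancels, `W z * p z = ∏ i, w i (z i)`, so by Fubini each such product integrates to
`∏ i, ∫ w i * q i = ∏ i, q i (x i)`: moments up to order `m - 1` reproduce polynomials of
degree below `m`. Summing back gives the multinomial expansion of `(∑ i, (y i - x i) ^ 2) ^ ℓ`.
-/

open MeasureTheory Finset Polynomial

theorem intervalIntegral_mul_eval_of_moments {w : ℝ → ℝ} {a b x : ℝ} {N : ℕ}
    (hwi : IntervalIntegrable w volume a b) (hw : ∀ k ≤ N, ∫ z in a..b, w z * z ^ k = x ^ k)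
    {q : ℝ[X]} (hq : q.natDegree ≤ N) :
    ∫ z in a..b, w z * q.eval z = q.eval x := by
  have hlt : q.natDegree < N + 1 := Nat.lt_succ_of_le hq
  simp_rw [eval_eq_sum_range' hlt, mul_sum, mul_left_comm (w _)]
  rw [intervalIntegral.integral_finsetSum fun k _ ↦
    (hwi.mul_continuousOn (continuous_pow k).continuousOn).const_mul _]
  refine sum_congr rfl fun k hk ↦ ?_
  rw [intervalIntegral.integral_const_mul, hw k (Nat.lt_succ_iff.1 (mem_range.1 hk))]

theorem volume_restrict_Icc_eq_pi {ι : Type*} [Fintype ι] (a b : ι → ℝ) :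
    (volume : Measure (ι → ℝ)).restrict (Set.Icc a b)
      = Measure.pi fun i ↦ volume.restrict (Set.Icc (a i) (b i)) := by
  rw [← Set.pi_univ_Icc, volume_pi, Measure.restrict_pi_pi]

theorem integrableOn_Icc_prod {ι : Type*} [Fintype ι] {a b : ι → ℝ} (hab : a ≤ b)
    {f : ι → ℝ → ℝ} (hf : ∀ i, IntervalIntegrable (f i) volume (a i) (b i)) :
    IntegrableOn (fun z ↦ ∏ i, f i (z i)) (Set.Icc a b) := by
  rw [IntegrableOn, volume_restrict_Icc_eq_pi]
  exact Integrable.fintype_prod fun i ↦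
    (intervalIntegrable_iff_integrableOn_Icc_of_le (hab i)).1 (hf i)

theorem setIntegral_Icc_prod {ι : Type*} [Fintype ι] {a b : ι → ℝ} (hab : a ≤ b)
    (f : ι → ℝ → ℝ) :
    ∫ z in Set.Icc a b, ∏ i, f i (z i) = ∏ i, ∫ t in a i..b i, f i t := by
  rw [volume_restrict_Icc_eq_pi, integral_fintype_prod_eq_prod]
  refine prod_congr rfl fun i _ ↦ ?_
  rw [intervalIntegral.integral_of_le (hab i), integral_Icc_eq_integral_Ioc]

theorem setIntegral_Icc_prod_mul_eval_of_moments {ι : Type*} [Fintype ι] {a b x : ι → ℝ}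
    (hab : a ≤ b) {w : ι → ℝ → ℝ} {N : ℕ}
    (hwi : ∀ i, IntervalIntegrable (w i) volume (a i) (b i))
    (hw : ∀ i, ∀ k ≤ N, ∫ z in a i..b i, w i z * z ^ k = x i ^ k)
    {q : ι → ℝ[X]} (hq : ∀ i, (q i).natDegree ≤ N) :
    ∫ z in Set.Icc a b, ∏ i, w i (z i) * (q i).eval (z i) = ∏ i, (q i).eval (x i) := by
  rw [setIntegral_Icc_prod hab fun i t ↦ w i t * (q i).eval t]
  exact prod_congr rfl fun i _ ↦
    intervalIntegral_mul_eval_of_moments (hwi i) (hw i) (hq i)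

theorem natDegree_C_sub_X_pow_le {R : Type*} [CommRing R] (y : R) (n : ℕ) :
    ((C y - X) ^ n).natDegree ≤ n :=
  (natDegree_pow_le_of_le n (natDegree_sub_le_of_le (natDegree_C y).le natDegree_X_le)).trans_eq
    (mul_one n)

theorem sum_sub_sq_pow_eq_sum_piAntidiag {ι R : Type*} [Fintype ι] [DecidableEq ι] [CommRing R]
    (y z : ι → R) (ℓ : ℕ) :
    (∑ i, (y i - z i) ^ 2) ^ ℓ = ∑ k ∈ piAntidiag univ ℓ,
      (Nat.multinomial univ k : R) * ∏ i, ((C (y i) - X) ^ (2 * k i)).eval (z i) := by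
  simp only [sum_pow_eq_sum_piAntidiag, eval_pow, eval_sub, eval_C, eval_X, pow_mul]

theorem stmt7_multivariate_moment_general (d m : ℕ)
    (x y : Fin d → ℝ)
    (w : Fin d → ℝ → ℝ) (hwc : ∀ i, Continuous (w i))
    (hw : ∀ i, ∀ k : ℕ, k ≤ m - 1 → ∫ z in (0:ℝ)..1, w i z * z ^ k = (x i) ^ k)
    (p : (Fin d → ℝ) → ℝ)
    (pmin pmax : ℝ) (hpmin : 0 < pmin)
    (hp : ∀ z ∈ Set.Icc (0 : Fin d → ℝ) 1, pmin ≤ p z ∧ p z ≤ pmax)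
    (W : (Fin d → ℝ) → ℝ) (hW : ∀ z, W z = (∏ i, w i (z i)) / p z)
    (ℓ : ℕ) (hℓ : 2 * ℓ ≤ m - 1) :
    ∫ z in Set.Icc (0 : Fin d → ℝ) 1,
        (∑ i, (y i - z i) ^ 2) ^ ℓ * W z * p z
      = (∑ i, (y i - x i) ^ 2) ^ ℓ := by
  classical
  set q : (Fin d → ℕ) → Fin d → ℝ[X] := fun k i ↦ (C (y i) - X) ^ (2 * k i)
  have hq : ∀ k ∈ piAntidiag univ ℓ, ∀ i, (q k i).natDegree ≤ m - 1 := fun k hk i ↦ by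
    have : k i ≤ ℓ :=
      (mem_piAntidiag.1 hk).1 ▸ single_le_sum (fun _ _ ↦ Nat.zero_le _) (mem_univ i)
    exact (natDegree_C_sub_X_pow_le _ _).trans (by omega)
  have hWp : ∀ z ∈ Set.Icc (0 : Fin d → ℝ) 1, W z * p z = ∏ i, w i (z i) := fun z hz ↦
    hW z ▸ div_mul_cancel₀ _ (hpmin.trans_le (hp z hz).1).ne'
  have hwi : ∀ i, IntervalIntegrable (w i) volume 0 1 := fun i ↦ (hwc i).intervalIntegrable _ _
  calc ∫ z in Set.Icc (0 : Fin d → ℝ) 1, (∑ i, (y i - z i) ^ 2) ^ ℓ * W z * p z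
      = ∫ z in Set.Icc (0 : Fin d → ℝ) 1, ∑ k ∈ piAntidiag univ ℓ,
          (Nat.multinomial univ k : ℝ) * ∏ i, w i (z i) * (q k i).eval (z i) := by
        refine setIntegral_congr_fun measurableSet_Icc fun z hz ↦ ?_
        rw [mul_assoc, hWp z hz, sum_sub_sq_pow_eq_sum_piAntidiag, sum_mul]
        refine sum_congr rfl fun k _ ↦ ?_
        rw [prod_mul_distrib]
        ring
    _ = ∑ k ∈ piAntidiag univ ℓ,
          (Nat.multinomial univ k : ℝ) * ∏ i, (q k i).eval (x i) := by
        refine integral_finsetSum _ (fun k _ ↦ ?_) |>.trans (sum_congr rfl fun k hk ↦ ?_)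
        · refine (integrableOn_Icc_prod (f := fun i t ↦ w i t * (q k i).eval t) zero_le_one
            fun i ↦ ((hwc i).mul (q k i).continuous).intervalIntegrable _ _).const_mul _
        · rw [integral_const_mul,
            setIntegral_Icc_prod_mul_eval_of_moments zero_le_one hwi hw (hq k hk)]
    _ = (∑ i, (y i - x i) ^ 2) ^ ℓ := (sum_sub_sq_pow_eq_sum_piAntidiag y x ℓ).symm

/-- Multivariate moment property of the tensorized weight function
`W_m^x(z) = (∏ i, w_m^{x_i}(z_i)) / p(z)`. -/
theorem stmt7_multivariate_moment (d m : ℕ) (hd : 0 < d)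
    (x y : Fin d → ℝ) (hx : x ∈ Set.Icc (0 : Fin d → ℝ) 1) (hy : y ∈ Set.Icc (0 : Fin d → ℝ) 1)
    (w : Fin d → ℝ → ℝ) (hwc : ∀ i, Continuous (w i))
    (hw : ∀ i, ∀ k : ℕ, k ≤ m - 1 → ∫ z in (0:ℝ)..1, w i z * z ^ k = (x i) ^ k)
    (p : (Fin d → ℝ) → ℝ) (hpm : Measurable p)
    (pmin pmax : ℝ) (hpmin : 0 < pmin)
    (hp : ∀ z ∈ Set.Icc (0 : Fin d → ℝ) 1, pmin ≤ p z ∧ p z ≤ pmax)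
    (W : (Fin d → ℝ) → ℝ) (hW : ∀ z, W z = (∏ i, w i (z i)) / p z)
    (ℓ : ℕ) (hℓ : 2 * ℓ ≤ m - 1) (hm : 1 ≤ m) :
    ∫ z in Set.Icc (0 : Fin d → ℝ) 1,
        (∑ i, (y i - z i) ^ 2) ^ ℓ * W z * p z
      = (∑ i, (y i - x i) ^ 2) ^ ℓ :=
  stmt7_multivariate_moment_general d m x y w hwc hw p pmin pmax hpmin hp W hW ℓ hℓ
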